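/- arXiv:2401.04248 — 3 statements merged into one kernel-verified Lean document; each statement's English description precedes it below -/
import Mathlib

section
/- For every real ν ≥ 1/2, the function t ↦ f_ν(t) = I_ν(t)/I_{ν−1}(t) is strictly increasing on (0,∞). -/
open MeasureTheory Real Filter Set
open scoped ENNReal NNReal Topology

noncomputable section

/-- The modified Bessel function of the first kind `I_ν(t)`. -/
def besselI (ν t : ℝ) : ℝ :=
  ∑' m : ℕ, (t / 2) ^ (2 * (m : ℝ) + ν) / ((m.factorial : ℝ) * Real.Gamma ((m : ℝ) + ν + 1))

/-- The ratio `f_ν(t) = I_ν(t) / I_{ν-1}(t)`. -/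
def besselRatio (ν t : ℝ) : ℝ := besselI ν t / besselI (ν - 1) t

/-- The inverse `f_ν⁻¹ : (0,1) → (0,∞)` of the strictly increasing bijection
`f_ν : (0,∞) → (0,1)`. -/
def besselRatioInv (ν y : ℝ) : ℝ := Function.invFunOn (besselRatio ν) (Set.Ioi 0) y

/-- The function `ξ_ν(t) = -t f_ν(t) + log((2π)^ν I_{ν-1}(t) / t^{ν-1})`. -/
def xiFun (ν t : ℝ) : ℝ :=
  -t * besselRatio ν t + Real.log ((2 * π) ^ ν * besselI (ν - 1) t / t ^ (ν - 1))

/-- The function `h_ν(t) = ξ_ν(f_ν⁻¹(t))`, for `t ∈ (0,1)`. -/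
def hFun (ν t : ℝ) : ℝ := xiFun ν (besselRatioInv ν t)

/-- Surface area of the unit `(n-1)`-sphere in `ℝⁿ`: `S_{n-1} = 2 π^{n/2} / Γ(n/2)`. -/
def surfaceArea (n : ℕ) : ℝ := 2 * π ^ ((n : ℝ) / 2) / Real.Gamma ((n : ℝ) / 2)

/-- `n`-dimensional Euclidean space. -/
abbrev EucSp (n : ℕ) := EuclideanSpace ℝ (Fin n)

/-- The uniform (normalized rotation-invariant) probability distribution on the sphere
`S^{n-1}(R) = {x ∈ ℝⁿ : ‖x‖ = R}`; for `R = 0` it is the point mass at the origin. -/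
def sphereUniform (n : ℕ) (R : ℝ) : Measure (EucSp n) :=
  ((volume : Measure (EucSp n)).toSphere Set.univ)⁻¹ •
    Measure.map (fun x : Metric.sphere (0 : EucSp n) 1 => R • (x : EucSp n))
      (volume : Measure (EucSp n)).toSphere

/-- Kullback-Leibler divergence `KL(μ‖ν)`, with value `∞` unless `μ ≪ ν` and the
log-likelihood ratio is `μ`-integrable. -/
def klDiv {Ω : Type*} [MeasurableSpace Ω] (μ ν : Measure Ω) : ℝ≥0∞ :=
  open scoped Classical in
  if μ ≪ ν ∧ Integrable (llr μ ν) μ then ENNReal.ofReal (∫ x, llr μ ν x ∂μ) else ⊤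

/-- The rate-distortion function `R_n(D;R)` of the uniform distribution on `S^{n-1}(R)`
under squared error distortion: the infimum of the mutual information `I(X̂;X)` over all
joint laws `π` of pairs `(X̂, X)` of `ℝⁿ`-valued random vectors such that `X ∼ μ_R` and
`E[‖X̂ - X‖²] ≤ D`. -/
def rateDistortion (n : ℕ) (D R : ℝ) : ℝ≥0∞ :=
  ⨅ (P : Measure (EucSp n × EucSp n)) (_ : IsProbabilityMeasure P)
    (_ : Measure.map Prod.snd P = sphereUniform n R)
    (_ : ∫⁻ y, ENNReal.ofReal (‖y.1 - y.2‖ ^ (2:ℕ)) ∂P ≤ ENNReal.ofReal D),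
    klDiv P ((Measure.map Prod.fst P).prod (Measure.map Prod.snd P))

/-!
With `x = t / 2` one has `f_ν(t) = x p(x²) / q(x²)`, where `p` and `q` are the entire series
`∑ a_ρ(m) u^m`, `a_ρ(m) = 1 / (m! Γ(m + ρ + 1))`, for `ρ = ν` and `ρ = ν - 1`. The derivative in
`x` is `N(x²) / q(x²)²` with `N = p q + 2 u (p' q - p q')`. The recurrence
`a_ρ(m - 1) = m (m + ρ) a_ρ(m)` shows that the coefficients `K_n` of `N` satisfy
`(2n + 2ν - 1) K_n = (2ν - 1) c_n`, where `c_n > 0` are the coefficients of `p q`. Hence `K_n ≥ 0`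
for `ν ≥ 1/2`, and `K_0 = c_0 > 0`, so `N > 0`.
-/

section PowerSeries

variable {c : ℕ → ℝ}

theorem summable_norm_natCast_mul_mul_pow (hc : ∀ r : ℝ, Summable fun m => ‖c m * r ^ m‖)
    (r : ℝ) : Summable fun m : ℕ => ‖(m : ℝ) * c m * r ^ m‖ := by
  refine (hc (2 * r)).of_nonneg_of_le (fun _ => norm_nonneg _) fun m => ?_
  have hm : (m : ℝ) ≤ 2 ^ m := by exact_mod_cast Nat.lt_two_pow_self.le
  rw [norm_mul, norm_mul, norm_mul, mul_pow, norm_mul, Real.norm_natCast, norm_pow, norm_pow,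
    Real.norm_two]
  calc (m : ℝ) * ‖c m‖ * ‖r‖ ^ m ≤ 2 ^ m * ‖c m‖ * ‖r‖ ^ m := by gcongr
    _ = ‖c m‖ * (2 ^ m * ‖r‖ ^ m) := by ring

theorem hasDerivAt_tsum_mul_pow (hc : ∀ r : ℝ, Summable fun m => ‖c m * r ^ m‖) (u : ℝ) :
    HasDerivAt (fun x => ∑' m, c m * x ^ m) (∑' m : ℕ, (m : ℝ) * c m * u ^ (m - 1)) u := by
  have hR : 1 ≤ |u| + 1 := by linarith [abs_nonneg u]
  have hu : u ∈ Ioo (-(|u| + 1)) (|u| + 1) :=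
    ⟨by linarith [neg_abs_le u], by linarith [le_abs_self u]⟩
  refine hasDerivAt_tsum_of_isPreconnected (g := fun m x => c m * x ^ m)
    (g' := fun m x => (m : ℝ) * c m * x ^ (m - 1))
    (summable_norm_natCast_mul_mul_pow hc (|u| + 1)) isOpen_Ioo isPreconnected_Ioo
    (fun m y _ => ?_) (fun m y hy => ?_) hu (hc u).of_norm hu
  · exact ((hasDerivAt_pow m y).const_mul (c m)).congr_deriv (by ring)
  · have hyR : ‖y‖ ≤ |u| + 1 := abs_le.mpr ⟨hy.1.le, hy.2.le⟩
    calc ‖(m : ℝ) * c m * y ^ (m - 1)‖ = ‖(m : ℝ) * c m‖ * ‖y‖ ^ (m - 1) := by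
          rw [norm_mul, norm_pow]
      _ ≤ ‖(m : ℝ) * c m‖ * (|u| + 1) ^ m := by
          gcongr
          exact (pow_le_pow_left₀ (norm_nonneg y) hyR _).trans
            (pow_le_pow_right₀ hR (m.sub_le 1))
      _ = ‖(m : ℝ) * c m * (|u| + 1) ^ m‖ := by
          rw [norm_mul (_ * _), norm_pow, Real.norm_eq_abs (|u| + 1),
            abs_of_pos (by positivity : (0 : ℝ) < |u| + 1)]

theorem mul_tsum_natCast_mul_mul_pow_sub_one (u : ℝ) :
    u * ∑' m : ℕ, (m : ℝ) * c m * u ^ (m - 1) = ∑' m : ℕ, (m : ℝ) * c m * u ^ m := by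
  rw [← tsum_mul_left]
  congr 1
  ext (_ | m)
  · simp
  · rw [Nat.add_sub_cancel, pow_succ]
    ring

theorem hasSum_sum_range_mul_mul_pow {a b : ℕ → ℝ} {u : ℝ}
    (ha : Summable fun m => ‖a m * u ^ m‖) (hb : Summable fun m => ‖b m * u ^ m‖) :
    HasSum (fun n => (∑ k ∈ Finset.range (n + 1), a k * b (n - k)) * u ^ n)
      ((∑' m, a m * u ^ m) * ∑' m, b m * u ^ m) := by
  refine (hasSum_sum_range_mul_of_summable_norm ha hb).congr_fun fun n => ?_
  rw [Finset.sum_mul]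
  refine Finset.sum_congr rfl fun k hk => ?_
  rw [← Nat.add_sub_cancel' (Finset.mem_range_succ_iff.mp hk)]
  rw [Nat.add_sub_cancel_left, pow_add]
  ring

end PowerSeries

def besselCoeff (ρ : ℝ) (m : ℕ) : ℝ := ((m.factorial : ℝ) * Gamma (m + ρ + 1))⁻¹

def besselSeries (ρ u : ℝ) : ℝ := ∑' m, besselCoeff ρ m * u ^ m

theorem besselCoeff_pos {ρ : ℝ} (hρ : -1 < ρ) (m : ℕ) : 0 < besselCoeff ρ m := by
  have : 0 < Gamma (m + ρ + 1) := Gamma_pos_of_pos (by linarith [m.cast_nonneg (α := ℝ)])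
  unfold besselCoeff
  positivity

theorem besselCoeff_eq_mul_besselCoeff_succ {ρ : ℝ} {m : ℕ} (h : (m : ℝ) + ρ + 1 ≠ 0) :
    besselCoeff ρ m = (m + 1) * (m + ρ + 1) * besselCoeff ρ (m + 1) := by
  have hm : ((m : ℝ) + 1) * (m + ρ + 1) ≠ 0 := mul_ne_zero (by positivity) h
  have hsucc : ((m + 1).factorial : ℝ) * Gamma ((m + 1 : ℕ) + ρ + 1)
      = ((m + 1) * (m + ρ + 1)) * (m.factorial * Gamma (m + ρ + 1)) := by
    rw [Nat.factorial_succ, Nat.cast_mul, Nat.cast_succ,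
      show (m : ℝ) + 1 + ρ + 1 = m + ρ + 1 + 1 by ring, Gamma_add_one h]
    ring
  rw [besselCoeff, besselCoeff, hsucc, mul_inv (((m : ℝ) + 1) * (m + ρ + 1)),
    mul_inv_cancel_left₀ hm]

theorem summable_norm_besselCoeff_mul_pow (ρ r : ℝ) :
    Summable fun m => ‖besselCoeff ρ m * r ^ m‖ := by
  refine summable_of_ratio_norm_eventually_le (r := 1 / 2) (by norm_num) ?_
  obtain ⟨M, hM⟩ := exists_nat_ge (max (2 * |r|) (-ρ))
  filter_upwards [eventually_ge_atTop M] with m hm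
  have hmM : (M : ℝ) ≤ m := by exact_mod_cast hm
  have h1 : 1 ≤ (m : ℝ) + ρ + 1 := by linarith [le_max_right (2 * |r|) (-ρ)]
  have h2 : 2 * |r| ≤ (m : ℝ) + 1 := by linarith [le_max_left (2 * |r|) (-ρ)]
  have hsucc := besselCoeff_eq_mul_besselCoeff_succ (ρ := ρ) (m := m) (by linarith)
  have hratio : |r| ≤ 1 / 2 * (((m : ℝ) + 1) * (m + ρ + 1)) := by nlinarith
  rw [norm_norm, norm_norm, hsucc]
  simp only [norm_mul, norm_pow, Real.norm_eq_abs, abs_of_pos (by positivity : (0 : ℝ) < m + 1),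
    abs_of_pos (by linarith : (0 : ℝ) < m + ρ + 1)]
  calc |besselCoeff ρ (m + 1)| * |r| ^ (m + 1) = |besselCoeff ρ (m + 1)| * |r| ^ m * |r| := by
        ring
    _ ≤ |besselCoeff ρ (m + 1)| * |r| ^ m * (1 / 2 * (((m : ℝ) + 1) * (m + ρ + 1))) := by
        gcongr
    _ = 1 / 2 * ((m + 1) * (m + ρ + 1) * |besselCoeff ρ (m + 1)| * |r| ^ m) := by ring

theorem besselSeries_pos {ρ u : ℝ} (hρ : -1 < ρ) (hu : 0 ≤ u) : 0 < besselSeries ρ u := by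
  refine (summable_norm_besselCoeff_mul_pow ρ u).of_norm.tsum_pos
    (fun m => mul_nonneg (besselCoeff_pos hρ m).le (pow_nonneg hu m)) 0 ?_
  simpa using besselCoeff_pos hρ 0

theorem besselI_eq_rpow_mul_besselSeries (ρ : ℝ) {t : ℝ} (ht : 0 < t) :
    besselI ρ t = (t / 2) ^ ρ * besselSeries ρ ((t / 2) ^ 2) := by
  rw [besselI, besselSeries, ← tsum_mul_left]
  refine tsum_congr fun m => ?_
  rw [rpow_add (by positivity), show 2 * (m : ℝ) = ((2 * m : ℕ) : ℝ) by push_cast; ring,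
    rpow_natCast, pow_mul, besselCoeff, div_eq_mul_inv]
  ring

theorem besselRatio_eq_mul_besselSeries_div (ν : ℝ) {t : ℝ} (ht : 0 < t) :
    besselRatio ν t
      = t / 2 * besselSeries ν ((t / 2) ^ 2) / besselSeries (ν - 1) ((t / 2) ^ 2) := by
  rw [besselRatio, besselI_eq_rpow_mul_besselSeries ν ht,
    besselI_eq_rpow_mul_besselSeries (ν - 1) ht, rpow_sub (by positivity), rpow_one]
  field_simp

def besselRatioDerivNumCoeff (ν : ℝ) (n : ℕ) : ℝ :=
  ∑ k ∈ Finset.range (n + 1),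
    (4 * (k : ℝ) - 2 * n + 1) * (besselCoeff ν k * besselCoeff (ν - 1) (n - k))

/- Both sides are the Cauchy coefficient `∑_{j<n} a_ν(j) a_{ν-1}(n-1-j)`: shift the index and use
`a_ρ(m) = (m + 1) (m + ρ + 1) a_ρ(m + 1)` on the first, resp. the second, factor. -/
theorem sum_besselCoeff_mul_besselCoeff_shift {ν : ℝ} (hν : 0 < ν) (n : ℕ) :
    ∑ k ∈ Finset.range (n + 1),
        (k * (k + ν)) * (besselCoeff ν k * besselCoeff (ν - 1) (n - k))
      = ∑ k ∈ Finset.range (n + 1),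
        ((n - k : ℕ) * ((n - k : ℕ) + ν - 1))
          * (besselCoeff ν k * besselCoeff (ν - 1) (n - k)) := by
  cases n with
  | zero => simp
  | succ n =>
    conv_lhs => rw [Finset.sum_range_succ']
    conv_rhs => rw [Finset.sum_range_succ]
    simp only [Nat.cast_zero, zero_mul, add_zero, Nat.sub_self]
    refine Finset.sum_congr rfl fun k hk => ?_
    have hkn := Finset.mem_range_succ_iff.mp hk
    rw [Nat.add_sub_add_right, Nat.succ_sub hkn,
      besselCoeff_eq_mul_besselCoeff_succ (ρ := ν) (m := k) (by positivity),
      besselCoeff_eq_mul_besselCoeff_succ (ρ := ν - 1) (m := n - k) (by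
        linarith [(n - k).cast_nonneg (α := ℝ)])]
    push_cast
    ring

theorem mul_besselRatioDerivNumCoeff {ν : ℝ} (hν : 0 < ν) (n : ℕ) :
    (2 * n + 2 * ν - 1) * besselRatioDerivNumCoeff ν n
      = (2 * ν - 1)
        * ∑ k ∈ Finset.range (n + 1), besselCoeff ν k * besselCoeff (ν - 1) (n - k) := by
  have hterm : ∀ k ∈ Finset.range (n + 1),
      (2 * n + 2 * ν - 1)
          * ((4 * (k : ℝ) - 2 * n + 1) * (besselCoeff ν k * besselCoeff (ν - 1) (n - k)))
        = (2 * ν - 1) * (besselCoeff ν k * besselCoeff (ν - 1) (n - k))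
          + 4 * ((k * (k + ν)) * (besselCoeff ν k * besselCoeff (ν - 1) (n - k)))
          - 4 * (((n - k : ℕ) * ((n - k : ℕ) + ν - 1))
            * (besselCoeff ν k * besselCoeff (ν - 1) (n - k))) := by
    intro k hk
    rw [Nat.cast_sub (Finset.mem_range_succ_iff.mp hk)]
    ring
  rw [besselRatioDerivNumCoeff, Finset.mul_sum, Finset.sum_congr rfl hterm,
    Finset.sum_sub_distrib, Finset.sum_add_distrib, ← Finset.mul_sum, ← Finset.mul_sum,
    ← Finset.mul_sum, sum_besselCoeff_mul_besselCoeff_shift hν]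
  ring

theorem besselRatioDerivNumCoeff_zero_pos {ν : ℝ} (hν : 0 < ν) :
    0 < besselRatioDerivNumCoeff ν 0 := by
  simpa [besselRatioDerivNumCoeff] using
    mul_pos (besselCoeff_pos (by linarith) 0) (besselCoeff_pos (ρ := ν - 1) (by linarith) 0)

theorem besselRatioDerivNumCoeff_nonneg {ν : ℝ} (hν : 1 / 2 ≤ ν) :
    ∀ n, 0 ≤ besselRatioDerivNumCoeff ν n
  | 0 => (besselRatioDerivNumCoeff_zero_pos (by linarith)).le
  | n + 1 => by
    have hpos : 0 < 2 * ((n + 1 : ℕ) : ℝ) + 2 * ν - 1 := by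
      push_cast
      linarith [n.cast_nonneg (α := ℝ)]
    refine (mul_nonneg_iff_of_pos_left hpos).mp ?_
    rw [mul_besselRatioDerivNumCoeff (by linarith)]
    exact mul_nonneg (by linarith) (Finset.sum_nonneg fun k _ =>
      (mul_pos (besselCoeff_pos (by linarith) k)
        (besselCoeff_pos (ρ := ν - 1) (by linarith) _)).le)

/- `p q + 2 u p' q - 2 u p q'` for `p = besselSeries ν`, `q = besselSeries (ν - 1)`; the two `tsum`s
are `u p'` and `u q'`. -/
def besselRatioDerivNum (ν u : ℝ) : ℝ :=
  besselSeries ν u * besselSeries (ν - 1) u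
    + 2 * ((∑' m : ℕ, (m : ℝ) * besselCoeff ν m * u ^ m) * besselSeries (ν - 1) u)
    - 2 * (besselSeries ν u * ∑' m : ℕ, (m : ℝ) * besselCoeff (ν - 1) m * u ^ m)

theorem hasSum_besselRatioDerivNumCoeff_mul_pow (ν u : ℝ) :
    HasSum (fun n => besselRatioDerivNumCoeff ν n * u ^ n) (besselRatioDerivNum ν u) := by
  have hp := summable_norm_besselCoeff_mul_pow ν u
  have hq := summable_norm_besselCoeff_mul_pow (ν - 1) u
  have hpq := hasSum_sum_range_mul_mul_pow hp hq
  have hp'q := hasSum_sum_range_mul_mul_pow (a := fun m => (m : ℝ) * besselCoeff ν m)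
    (summable_norm_natCast_mul_mul_pow (summable_norm_besselCoeff_mul_pow ν) u) hq
  have hpq' := hasSum_sum_range_mul_mul_pow (b := fun m => (m : ℝ) * besselCoeff (ν - 1) m) hp
    (summable_norm_natCast_mul_mul_pow (summable_norm_besselCoeff_mul_pow (ν - 1)) u)
  refine ((hpq.add (hp'q.mul_left 2)).sub (hpq'.mul_left 2)).congr_fun fun n => ?_
  simp only [besselRatioDerivNumCoeff, Finset.sum_mul, Finset.mul_sum, ← Finset.sum_add_distrib,
    ← Finset.sum_sub_distrib]
  refine Finset.sum_congr rfl fun k hk => ?_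
  rw [Nat.cast_sub (Finset.mem_range_succ_iff.mp hk)]
  ring

theorem besselRatioDerivNum_pos {ν u : ℝ} (hν : 1 / 2 ≤ ν) (hu : 0 ≤ u) :
    0 < besselRatioDerivNum ν u :=
  hasSum_lt (f := 0) (i := 0)
    (fun n => mul_nonneg (besselRatioDerivNumCoeff_nonneg hν n) (pow_nonneg hu n))
    (by simpa using besselRatioDerivNumCoeff_zero_pos (by linarith)) hasSum_zero
    (hasSum_besselRatioDerivNumCoeff_mul_pow ν u)

theorem hasDerivAt_mul_besselSeries_div {ν : ℝ} (hν : 0 < ν) (x : ℝ) :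
    HasDerivAt (fun x => x * besselSeries ν (x ^ 2) / besselSeries (ν - 1) (x ^ 2))
      (besselRatioDerivNum ν (x ^ 2) / besselSeries (ν - 1) (x ^ 2) ^ 2) x := by
  have hsq : HasDerivAt (fun x : ℝ => x ^ 2) (2 * x) x := by simpa using hasDerivAt_pow 2 x
  have hp := (hasDerivAt_tsum_mul_pow (summable_norm_besselCoeff_mul_pow ν) (x ^ 2)).comp x hsq
  have hq :=
    (hasDerivAt_tsum_mul_pow (summable_norm_besselCoeff_mul_pow (ν - 1)) (x ^ 2)).comp x hsq
  have hq0 : besselSeries (ν - 1) (x ^ 2) ≠ 0 :=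
    (besselSeries_pos (by linarith) (sq_nonneg x)).ne'
  refine (((hasDerivAt_id' x).mul hp).div hq hq0).congr_deriv ?_
  rw [besselRatioDerivNum, ← mul_tsum_natCast_mul_mul_pow_sub_one,
    ← mul_tsum_natCast_mul_mul_pow_sub_one]
  simp only [besselSeries, Function.comp_apply, Pi.mul_apply]
  ring

theorem strictMono_mul_besselSeries_div {ν : ℝ} (hν : 1 / 2 ≤ ν) :
    StrictMono fun x => x * besselSeries ν (x ^ 2) / besselSeries (ν - 1) (x ^ 2) :=
  strictMono_of_hasDerivAt_pos (hasDerivAt_mul_besselSeries_div (by linarith)) fun x =>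
    div_pos (besselRatioDerivNum_pos hν (sq_nonneg x))
      (pow_pos (besselSeries_pos (by linarith) (sq_nonneg x)) 2)

/-- **Lemma.** For `ν ≥ 1/2`, `t ↦ f_ν(t) = I_ν(t)/I_{ν-1}(t)` is strictly increasing on
`(0,∞)`. -/
theorem strictMonoOn_besselRatio (ν : ℝ) (hν : 1 / 2 ≤ ν) :
    StrictMonoOn (besselRatio ν) (Set.Ioi (0:ℝ)) := by
  intro s hs t ht hst
  rw [besselRatio_eq_mul_besselSeries_div ν hs, besselRatio_eq_mul_besselSeries_div ν ht]
  exact strictMono_mul_besselSeries_div hν (by linarith)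

end
end

section
/- For every real ν ≥ 1/2 and every t > 0, it holds that g_ν(t) ≤ f_ν(t) ≤ g_{ν−1/2}(t) ≤ 1, where g_ν(t) = t/(ν + √(ν² + t²)). -/
open MeasureTheory Real Filter Set
open scoped ENNReal NNReal Topology

noncomputable section

/-- The function `g_ν(t) = t / (ν + √(ν² + t²))`. -/
def gFun (ν t : ℝ) : ℝ := t / (ν + Real.sqrt (ν ^ 2 + t ^ 2))

namespace BesselBnd
open Finset

def co (μ : ℝ) (m : ℕ) : ℝ := 1 / (m.factorial * Real.Gamma ((m : ℝ) + μ + 1))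

variable {ν : ℝ}

/-- weight `W n k = 1/(k! (n-k)! Γ(k+ν) Γ(n-k+ν))` -/
def Wt (ν : ℝ) (n k : ℕ) : ℝ :=
  1 / (k.factorial * (n - k).factorial * Real.Gamma ((k : ℝ) + ν) * Real.Gamma (((n - k : ℕ) : ℝ) + ν))

/-- weight `T n k = 1/(k! (n-k)! Γ(k+ν+1) Γ(n-k+ν+1))` -/
def Tt (ν : ℝ) (n k : ℕ) : ℝ :=
  1 / (k.factorial * (n - k).factorial * Real.Gamma ((k : ℝ) + ν + 1) * Real.Gamma (((n - k : ℕ) : ℝ) + ν + 1))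

section hv
variable (hν : (1:ℝ)/2 ≤ ν)
include hν

lemma hν0 : 0 < ν := by linarith

lemma Gk_pos (k : ℕ) : 0 < Real.Gamma ((k:ℝ) + ν) :=
  Real.Gamma_pos_of_pos (by have : (0:ℝ) ≤ k := Nat.cast_nonneg k; linarith)

lemma Gk1_pos (k : ℕ) : 0 < Real.Gamma ((k:ℝ) + ν + 1) :=
  Real.Gamma_pos_of_pos (by have : (0:ℝ) ≤ k := Nat.cast_nonneg k; linarith)

lemma Wt_pos (n k : ℕ) : 0 < Wt ν n k := by
  have h1 : (0:ℝ) < k.factorial := by exact_mod_cast k.factorial_pos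
  have h2 : (0:ℝ) < (n-k).factorial := by exact_mod_cast (n-k).factorial_pos
  have h3 := Gk_pos hν k
  have h4 := Gk_pos hν (n-k)
  exact div_pos one_pos (by positivity)

lemma Tt_pos (n k : ℕ) : 0 < Tt ν n k := by
  have h1 : (0:ℝ) < k.factorial := by exact_mod_cast k.factorial_pos
  have h2 : (0:ℝ) < (n-k).factorial := by exact_mod_cast (n-k).factorial_pos
  have h3 := Gk1_pos hν k
  have h4 := Gk1_pos hν (n-k)
  exact div_pos one_pos (by positivity)

lemma kν_pos (k : ℕ) : 0 < (k:ℝ) + ν := by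
  have : (0:ℝ) ≤ k := Nat.cast_nonneg k
  have := hν0 hν
  linarith

lemma Gamma_succ_k (k : ℕ) :
    Real.Gamma ((k:ℝ) + ν + 1) = ((k:ℝ) + ν) * Real.Gamma ((k:ℝ) + ν) :=
  Real.Gamma_add_one (ne_of_gt (kν_pos hν k))

lemma Tt_eq (n k : ℕ) :
    Tt ν n k = Wt ν n k / (((k:ℝ) + ν) * (((n - k : ℕ) : ℝ) + ν)) := by
  unfold Tt Wt
  rw [Gamma_succ_k hν k, Gamma_succ_k hν (n-k)]
  have h1 : ((k.factorial : ℝ)) ≠ 0 := by exact_mod_cast k.factorial_ne_zero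
  have h2 : (((n-k).factorial : ℝ)) ≠ 0 := by exact_mod_cast (n-k).factorial_ne_zero
  have h3 := ne_of_gt (Gk_pos hν k)
  have h4 := ne_of_gt (Gk_pos hν (n-k))
  have h5 := ne_of_gt (kν_pos hν k)
  have h6 := ne_of_gt (kν_pos hν (n-k))
  field_simp

end hv

lemma Wt_symm {n k : ℕ} (hk : k ≤ n) : Wt ν n (n - k) = Wt ν n k := by
  unfold Wt
  rw [Nat.sub_sub_self hk]
  ring

/-- per-term: `co (ν-1) k * co (ν-1) (n-k) = W n k` -/
lemma co_BB (n k : ℕ) : co (ν-1) k * co (ν-1) (n - k) = Wt ν n k := by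
  unfold co Wt
  rw [show (k:ℝ) + (ν-1) + 1 = (k:ℝ) + ν by ring,
    show (((n-k:ℕ)):ℝ) + (ν-1) + 1 = (((n-k:ℕ)):ℝ) + ν by ring]
  rw [div_mul_div_comm]
  ring_nf

/-- per-term: `co ν k * co (ν-1) (n-k) = W n k / (k+ν)` -/
lemma co_AB (hν : (1:ℝ)/2 ≤ ν) (n k : ℕ) :
    co ν k * co (ν-1) (n - k) = Wt ν n k * (1 / ((k:ℝ) + ν)) := by
  unfold co Wt
  rw [show (((n-k:ℕ)):ℝ) + (ν-1) + 1 = (((n-k:ℕ)):ℝ) + ν by ring, Gamma_succ_k hν k]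
  have h1 : ((k.factorial : ℝ)) ≠ 0 := by exact_mod_cast k.factorial_ne_zero
  have h2 : (((n-k).factorial : ℝ)) ≠ 0 := by exact_mod_cast (n-k).factorial_ne_zero
  have h3 := ne_of_gt (Gk_pos hν k)
  have h4 := ne_of_gt (Gk_pos hν (n-k))
  have h5 := ne_of_gt (kν_pos hν k)
  field_simp

/-- per-term for the AA sum (with `n = m+1`, `k ≤ m`):
`co ν k * co ν (m-k) = W (m+1) k * ((m+1-k)/(k+ν))` -/
lemma co_AA (hν : (1:ℝ)/2 ≤ ν) {m k : ℕ} (hk : k ≤ m) :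
    co ν k * co ν (m - k) = Wt ν (m+1) k * ((((m:ℝ)+1) - k) / ((k:ℝ) + ν)) := by
  have hsub : m + 1 - k = (m - k) + 1 := by omega
  have hcast : (((m - k : ℕ)):ℝ) = (m:ℝ) - k := by
    rw [Nat.cast_sub hk]
  unfold co Wt
  rw [hsub, Gamma_succ_k hν k]
  push_cast [Nat.factorial_succ]
  rw [hcast]
  rw [show ((m:ℝ) - k) + ν + 1 = (((m:ℝ) - k) + 1) + ν by ring]
  have h1 : ((k.factorial : ℝ)) ≠ 0 := by exact_mod_cast k.factorial_ne_zero
  have h2 : (((m-k).factorial : ℝ)) ≠ 0 := by exact_mod_cast (m-k).factorial_ne_zero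
  have h3 := ne_of_gt (Gk_pos hν k)
  have h4 : Real.Gamma (((m:ℝ) - k) + 1 + ν) ≠ 0 := by
    have : (0:ℝ) < ((m:ℝ) - k) + 1 + ν := by
      have : (k:ℝ) ≤ m := by exact_mod_cast hk
      have := hν0 hν; linarith
    exact ne_of_gt (Real.Gamma_pos_of_pos this)
  have h5 := ne_of_gt (kν_pos hν k)
  have h6 : ((m:ℝ) - k) + 1 ≠ 0 := by
    have : (k:ℝ) ≤ m := by exact_mod_cast hk
    intro h; linarith
  field_simp
  ring

/-- Cauchy coefficients -/
def cAA (ν : ℝ) (m : ℕ) : ℝ := ∑ k ∈ range (m+1), co ν k * co ν (m - k)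
def cAB (ν : ℝ) (m : ℕ) : ℝ := ∑ k ∈ range (m+1), co ν k * co (ν-1) (m - k)
def cBB (ν : ℝ) (m : ℕ) : ℝ := ∑ k ∈ range (m+1), co (ν-1) k * co (ν-1) (m - k)

lemma cBB_eq (n : ℕ) : cBB ν n = ∑ k ∈ range (n+1), Wt ν n k :=
  Finset.sum_congr rfl fun k _ => co_BB n k

lemma cAB_eq (hν : (1:ℝ)/2 ≤ ν) (n : ℕ) :
    cAB ν n = ∑ k ∈ range (n+1), Wt ν n k * (1 / ((k:ℝ) + ν)) :=
  Finset.sum_congr rfl fun k _ => co_AB hν n k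

lemma cAA_eq (hν : (1:ℝ)/2 ≤ ν) (m : ℕ) :
    cAA ν m = ∑ k ∈ range (m+2), Wt ν (m+1) k * ((((m:ℝ)+1) - k) / ((k:ℝ) + ν)) := by
  rw [Finset.sum_range_succ (n := m+1)]
  have hlast : Wt ν (m+1) (m+1) * ((((m:ℝ)+1) - (m+1:ℕ)) / (((m+1:ℕ):ℝ) + ν)) = 0 := by
    push_cast; ring_nf
  rw [hlast, add_zero]
  exact Finset.sum_congr rfl fun k hk => co_AA hν (Finset.mem_range_succ_iff.mp hk)

lemma sum_reflect (f : ℕ → ℝ) (n : ℕ) :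
    ∑ k ∈ range (n+1), f k = ∑ k ∈ range (n+1), f (n - k) := by
  have := Finset.sum_range_reflect f (n+1)
  simp only [Nat.add_sub_cancel] at this
  exact this.symm

section hv2
variable (hν : (1:ℝ)/2 ≤ ν)
include hν

/-- the sum `S1 = ∑ W k (2k-n)/(k+ν)` is nonpositive -/
lemma S1_nonpos (n : ℕ) :
    ∑ k ∈ range (n+1), Wt ν n k * ((2*(k:ℝ) - n) / ((k:ℝ) + ν)) ≤ 0 := by
  set f : ℕ → ℝ := fun k => Wt ν n k * ((2*(k:ℝ) - n) / ((k:ℝ) + ν)) with hf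
  have hrefl : ∑ k ∈ range (n+1), f k = ∑ k ∈ range (n+1), f (n - k) := sum_reflect f n
  have h2 : 2 * ∑ k ∈ range (n+1), f k
      = ∑ k ∈ range (n+1), (f k + f (n - k)) := by
    rw [Finset.sum_add_distrib, ← hrefl]; ring
  have hterm : ∀ k ∈ range (n+1), f k + f (n - k)
      = -(Wt ν n k * (((n:ℝ) - 2*k)^2 / (((k:ℝ) + ν) * ((((n - k : ℕ)):ℝ) + ν)))) := by
    intro k hk
    have hk' : k ≤ n := Finset.mem_range_succ_iff.mp hk
    have hcast : (((n - k : ℕ)):ℝ) = (n:ℝ) - k := Nat.cast_sub hk'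
    have hsub2 : n - (n - k) = k := Nat.sub_sub_self hk'
    have hWs : Wt ν n (n - k) = Wt ν n k := Wt_symm hk'
    simp only [hf, hWs, hsub2, hcast]
    have h5 := ne_of_gt (kν_pos hν k)
    have h6 : ((n:ℝ) - k) + ν ≠ 0 := by
      have : (k:ℝ) ≤ n := by exact_mod_cast hk'
      have := hν0 hν; intro h; linarith
    field_simp
    ring
  have h3 : 2 * ∑ k ∈ range (n+1), f k
      = ∑ k ∈ range (n+1), -(Wt ν n k * (((n:ℝ) - 2*k)^2 / (((k:ℝ) + ν) * ((((n - k : ℕ)):ℝ) + ν)))) :=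
    h2.trans (Finset.sum_congr rfl hterm)
  have h4 : (∑ k ∈ range (n+1), -(Wt ν n k * (((n:ℝ) - 2*k)^2 / (((k:ℝ) + ν) * ((((n - k : ℕ)):ℝ) + ν))))) ≤ 0 := by
    apply Finset.sum_nonpos
    intro k hk
    have hW := Wt_pos hν n k
    have h5 := kν_pos hν k
    have h6 : (0:ℝ) < (((n - k : ℕ)):ℝ) + ν := by
      have : (0:ℝ) ≤ ((n - k : ℕ):ℝ) := Nat.cast_nonneg _
      have := hν0 hν; linarith
    have : 0 ≤ Wt ν n k * (((n:ℝ) - 2*k)^2 / (((k:ℝ) + ν) * ((((n - k : ℕ)):ℝ) + ν))) := by positivity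
    linarith
  linarith
end hv2

section hv3
variable (hν : (1:ℝ)/2 ≤ ν)
include hν

lemma tel_step {n k : ℕ} (hk : k < n) :
    2*((k:ℝ)+1)*(((k:ℝ)+1)+ν)*(((n:ℝ)+1) - 2*((k:ℝ)+1)) * Tt ν n (k+1)
      - 2*(k:ℝ)*((k:ℝ)+ν)*(((n:ℝ)+1) - 2*(k:ℝ)) * Tt ν n k
    = Tt ν n k * ((2*(n:ℝ)+2*ν-1)*((n:ℝ)-2*(k:ℝ))^2 - (n:ℝ)*((n:ℝ)+2*ν)) := by
  obtain ⟨j, hj⟩ : ∃ j, n = k + 1 + j := ⟨n - (k+1), by omega⟩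
  subst hj
  have e1 : k + 1 + j - k = j + 1 := by omega
  have e2 : k + 1 + j - (k+1) = j := by omega
  unfold Tt
  rw [e1, e2]
  have hGk := Gk1_pos hν k
  have hGj := Gk1_pos hν j
  have hrk : Real.Gamma (((k+1:ℕ):ℝ) + ν + 1) = ((k:ℝ) + ν + 1) * Real.Gamma ((k:ℝ) + ν + 1) := by
    rw [show (((k+1:ℕ)):ℝ) + ν + 1 = ((k:ℝ) + ν + 1) + 1 by push_cast; ring]
    exact Real.Gamma_add_one (by have := kν_pos hν k; intro h; linarith)
  have hrj : Real.Gamma (((j+1:ℕ):ℝ) + ν + 1) = ((j:ℝ) + ν + 1) * Real.Gamma ((j:ℝ) + ν + 1) := by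
    rw [show (((j+1:ℕ)):ℝ) + ν + 1 = ((j:ℝ) + ν + 1) + 1 by push_cast; ring]
    exact Real.Gamma_add_one (by have := kν_pos hν j; intro h; linarith)
  rw [hrk, hrj]
  have f1 : ((k+1).factorial : ℝ) = ((k:ℝ)+1) * k.factorial := by
    push_cast [Nat.factorial_succ]; ring
  have f2 : ((j+1).factorial : ℝ) = ((j:ℝ)+1) * j.factorial := by
    push_cast [Nat.factorial_succ]; ring
  rw [f1, f2]
  have h1 : ((k.factorial : ℝ)) ≠ 0 := by exact_mod_cast k.factorial_ne_zero
  have h2 : ((j.factorial : ℝ)) ≠ 0 := by exact_mod_cast j.factorial_ne_zero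
  have h3 := ne_of_gt hGk
  have h4 := ne_of_gt hGj
  have h5 : ((k:ℝ) + ν + 1) ≠ 0 := by have := kν_pos hν k; intro h; linarith
  have h6 : ((j:ℝ) + ν + 1) ≠ 0 := by have := kν_pos hν j; intro h; linarith
  have h7 : ((k:ℝ) + 1) ≠ 0 := by positivity
  have h8 : ((j:ℝ) + 1) ≠ 0 := by positivity
  push_cast
  field_simp
  ring

lemma telescope_id (n : ℕ) :
    ∑ k ∈ range (n+1), Tt ν n k * ((2*(n:ℝ)+2*ν-1)*((n:ℝ)-2*(k:ℝ))^2 - (n:ℝ)*((n:ℝ)+2*ν)) = 0 := by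
  set G : ℕ → ℝ := fun k => 2*(k:ℝ)*((k:ℝ)+ν)*(((n:ℝ)+1) - 2*(k:ℝ)) * Tt ν n k with hG
  rw [Finset.sum_range_succ]
  have hmain : ∑ k ∈ range n, Tt ν n k * ((2*(n:ℝ)+2*ν-1)*((n:ℝ)-2*(k:ℝ))^2 - (n:ℝ)*((n:ℝ)+2*ν))
      = ∑ k ∈ range n, (G (k+1) - G k) := by
    refine Finset.sum_congr rfl fun k hk => ?_
    have hk' : k < n := Finset.mem_range.mp hk
    rw [hG]
    simp only []
    rw [← tel_step hν hk']
    push_cast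
    ring
  rw [hmain, Finset.sum_range_sub]
  have hG0 : G 0 = 0 := by simp [hG]
  have hbdy : Tt ν n n * ((2*(n:ℝ)+2*ν-1)*((n:ℝ)-2*(n:ℝ))^2 - (n:ℝ)*((n:ℝ)+2*ν)) = - G n := by
    rw [hG]; ring
  rw [hG0, hbdy]
  ring

end hv3

section hv4
variable (hν : (1:ℝ)/2 ≤ ν)
include hν

lemma S2_nonneg (n : ℕ) :
    0 ≤ ∑ k ∈ range (n+1), Wt ν n k * ((4*(k:ℝ) - 2*(n:ℝ) + 1) / ((k:ℝ) + ν)) := by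
  set f : ℕ → ℝ := fun k => Wt ν n k * ((4*(k:ℝ) - 2*(n:ℝ) + 1) / ((k:ℝ) + ν)) with hf
  have hrefl : ∑ k ∈ range (n+1), f k = ∑ k ∈ range (n+1), f (n - k) := sum_reflect f n
  have h2 : 2 * ∑ k ∈ range (n+1), f k = ∑ k ∈ range (n+1), (f k + f (n - k)) := by
    rw [Finset.sum_add_distrib, ← hrefl]; ring
  have hterm : ∀ k ∈ range (n+1), f k + f (n - k)
      = Tt ν n k * (((n:ℝ) + 2*ν) - 2*((n:ℝ) - 2*(k:ℝ))^2) := by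
    intro k hk
    have hk' : k ≤ n := Finset.mem_range_succ_iff.mp hk
    have hcast : (((n - k : ℕ)):ℝ) = (n:ℝ) - k := Nat.cast_sub hk'
    have hsub2 : n - (n - k) = k := Nat.sub_sub_self hk'
    have hWs : Wt ν n (n - k) = Wt ν n k := Wt_symm hk'
    rw [Tt_eq hν]
    simp only [hf, hWs, hsub2, hcast]
    have h5 := ne_of_gt (kν_pos hν k)
    have h6 : ((n:ℝ) - k) + ν ≠ 0 := by
      have : (k:ℝ) ≤ n := by exact_mod_cast hk'
      have := hν0 hν; intro h; linarith
    field_simp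
    ring
  have h3 : 2 * ∑ k ∈ range (n+1), f k
      = ∑ k ∈ range (n+1), Tt ν n k * (((n:ℝ) + 2*ν) - 2*((n:ℝ) - 2*(k:ℝ))^2) :=
    h2.trans (Finset.sum_congr rfl hterm)
  -- abbreviations
  set C : ℝ := ∑ k ∈ range (n+1), Tt ν n k with hC
  set P : ℝ := ∑ k ∈ range (n+1), Tt ν n k * ((n:ℝ) - 2*(k:ℝ))^2 with hP
  have hCpos : 0 ≤ C := Finset.sum_nonneg fun k _ => le_of_lt (Tt_pos hν n k)
  have hPid : (2*(n:ℝ)+2*ν-1) * P = (n:ℝ)*((n:ℝ)+2*ν) * C := by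
    have htel := telescope_id hν n
    have hsplit : ∑ k ∈ range (n+1), Tt ν n k * ((2*(n:ℝ)+2*ν-1)*((n:ℝ)-2*(k:ℝ))^2 - (n:ℝ)*((n:ℝ)+2*ν))
        = (2*(n:ℝ)+2*ν-1) * P - (n:ℝ)*((n:ℝ)+2*ν) * C := by
      rw [hP, hC, Finset.mul_sum, Finset.mul_sum, ← Finset.sum_sub_distrib]
      exact Finset.sum_congr rfl fun k _ => by ring
    rw [hsplit] at htel
    linarith
  have hVsplit : ∑ k ∈ range (n+1), Tt ν n k * (((n:ℝ) + 2*ν) - 2*((n:ℝ) - 2*(k:ℝ))^2)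
      = ((n:ℝ) + 2*ν) * C - 2 * P := by
    rw [hP, hC, Finset.mul_sum, Finset.mul_sum, ← Finset.sum_sub_distrib]
    exact Finset.sum_congr rfl fun k _ => by ring
  rw [hVsplit] at h3
  have hnn : (0:ℝ) ≤ n := Nat.cast_nonneg n
  have hPnonneg : 0 ≤ P := Finset.sum_nonneg fun k _ =>
    mul_nonneg (le_of_lt (Tt_pos hν n k)) (sq_nonneg _)
  rcases Nat.eq_zero_or_pos n with hn0 | hn1
  · subst hn0
    have hP0 : P = 0 := by simp [hP]
    rw [hP0] at h3
    have := hν0 hν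
    nlinarith [mul_nonneg hCpos (by linarith : (0:ℝ) ≤ 2*ν)]
  · have hn1' : (1:ℝ) ≤ n := by exact_mod_cast hn1
    have hden : 0 < 2*(n:ℝ)+2*ν-1 := by linarith
    nlinarith [mul_nonneg (mul_nonneg hCpos hnn) (by linarith : (0:ℝ) ≤ 2*ν - 1),
      mul_nonneg hCpos (by linarith : (0:ℝ) ≤ 2*ν - 1)]

end hv4

section hv5
variable (hν : (1:ℝ)/2 ≤ ν)
include hν

lemma coef1 (m : ℕ) : cBB ν (m+1) ≤ cAA ν m + ν * cAB ν (m+1) := by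
  have hS1 := S1_nonpos hν (m+1)
  have key : cAA ν m + ν * cAB ν (m+1) - cBB ν (m+1)
      = -(∑ k ∈ range (m+1+1), Wt ν (m+1) k * ((2*(k:ℝ) - ((m+1:ℕ):ℝ)) / ((k:ℝ) + ν))) := by
    rw [cBB_eq, cAB_eq hν, cAA_eq hν m, Finset.mul_sum, ← Finset.sum_add_distrib,
      ← Finset.sum_sub_distrib, ← Finset.sum_neg_distrib]
    refine Finset.sum_congr rfl fun k _ => ?_
    have h5 := ne_of_gt (kν_pos hν k)
    push_cast
    field_simp
    ring
  linarith

lemma coef2 (m : ℕ) : 2 * cAA ν m + (2*ν - 1) * cAB ν (m+1) ≤ 2 * cBB ν (m+1) := by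
  have hS2 := S2_nonneg hν (m+1)
  have key : 2 * cBB ν (m+1) - (2 * cAA ν m + (2*ν - 1) * cAB ν (m+1))
      = ∑ k ∈ range (m+1+1), Wt ν (m+1) k * ((4*(k:ℝ) - 2*((m+1:ℕ):ℝ) + 1) / ((k:ℝ) + ν)) := by
    rw [cBB_eq, cAB_eq hν, cAA_eq hν m, Finset.mul_sum, Finset.mul_sum, Finset.mul_sum,
      ← Finset.sum_add_distrib, ← Finset.sum_sub_distrib]
    refine Finset.sum_congr rfl fun k _ => ?_
    have h5 := ne_of_gt (kν_pos hν k)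
    push_cast
    field_simp
    ring
  linarith

omit hν in
lemma cBB0 : cBB ν 0 = co (ν-1) 0 * co (ν-1) 0 := by
  simp [cBB]

omit hν in
lemma cAB0 : cAB ν 0 = co ν 0 * co (ν-1) 0 := by
  simp [cAB]

omit hν in
lemma co0B : co (ν-1) 0 = 1 / Real.Gamma ν := by
  unfold co
  norm_num

lemma co0A : co ν 0 = 1 / (ν * Real.Gamma ν) := by
  unfold co
  norm_num
  rw [Real.Gamma_add_one (ne_of_gt (hν0 hν)), mul_inv]
  ring

lemma coef1₀ : cBB ν 0 ≤ 0 + ν * cAB ν 0 := by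
  rw [cBB0, cAB0, co0B, co0A hν]
  have hG := Real.Gamma_pos_of_pos (hν0 hν)
  have hν' := hν0 hν
  rw [zero_add]
  have key : ν * (1 / (ν * Real.Gamma ν) * (1 / Real.Gamma ν))
      = 1 / Real.Gamma ν * (1 / Real.Gamma ν) := by
    field_simp
  rw [key]

lemma coef2₀ : 2 * 0 + (2*ν - 1) * cAB ν 0 ≤ 2 * cBB ν 0 := by
  rw [cBB0, cAB0, co0B, co0A hν]
  have hG := Real.Gamma_pos_of_pos (hν0 hν)
  have hν' := hν0 hν
  rw [mul_zero, zero_add]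
  have hGG : (0:ℝ) < Real.Gamma ν * Real.Gamma ν := by positivity
  have h1 : (1:ℝ)/(ν*Real.Gamma ν) * (1/Real.Gamma ν) = 1/(ν*(Real.Gamma ν*Real.Gamma ν)) := by
    rw [div_mul_div_comm]; ring_nf
  have h2 : (1:ℝ)/Real.Gamma ν * (1/Real.Gamma ν) = 1/(Real.Gamma ν*Real.Gamma ν) := by
    rw [div_mul_div_comm]; norm_num
  rw [h1, h2, mul_one_div, mul_one_div, div_le_div_iff₀ (by positivity) (by positivity)]
  nlinarith [hGG]

end hv5

lemma arg_pos {μ : ℝ} (hμ : 0 < μ + 1) (m : ℕ) : 0 < (m:ℝ) + μ + 1 := by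
  have : (0:ℝ) ≤ (m:ℝ) := Nat.cast_nonneg m
  linarith

lemma co_pos {μ : ℝ} (hμ : 0 < μ + 1) (m : ℕ) : 0 < co μ m := by
  have h1 : (0:ℝ) < m.factorial := by exact_mod_cast m.factorial_pos
  have h2 : 0 < Real.Gamma ((m:ℝ) + μ + 1) := Real.Gamma_pos_of_pos (arg_pos hμ m)
  exact div_pos one_pos (by positivity)

lemma term_pos {μ : ℝ} (hμ : 0 < μ + 1) {u : ℝ} (hu : 0 < u) (m : ℕ) :
    0 < co μ m * u ^ m := mul_pos (co_pos hμ m) (pow_pos hu m)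

lemma summable_co {μ : ℝ} (hμ : 0 < μ + 1) {u : ℝ} (hu : 0 < u) :
    Summable (fun m : ℕ => co μ m * u ^ m) := by
  apply summable_of_ratio_test_tendsto_lt_one (l := 0) one_pos
  · exact Eventually.of_forall fun n => ne_of_gt (term_pos hμ hu n)
  · have key : ∀ n : ℕ, ‖co μ (n+1) * u ^ (n+1)‖ / ‖co μ n * u ^ n‖
        = u / (((n:ℝ)+1) * ((n:ℝ) + μ + 1)) := by
      intro n
      have hpos := arg_pos hμ n
      have hne : ((n:ℝ) + μ + 1) ≠ 0 := ne_of_gt hpos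
      have hrec : Real.Gamma ((↑(n+1):ℝ) + μ + 1) = ((n:ℝ) + μ + 1) * Real.Gamma ((n:ℝ) + μ + 1) := by
        have h : ((↑(n+1):ℝ) + μ + 1) = ((n:ℝ) + μ + 1) + 1 := by push_cast; ring
        rw [h, Real.Gamma_add_one hne]
      have hG : 0 < Real.Gamma ((n:ℝ) + μ + 1) := Real.Gamma_pos_of_pos hpos
      have hfn : (0:ℝ) < n.factorial := by exact_mod_cast n.factorial_pos
      rw [Real.norm_eq_abs, Real.norm_eq_abs,
        abs_of_pos (term_pos hμ hu (n+1)), abs_of_pos (term_pos hμ hu n)]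
      unfold co
      rw [hrec]
      push_cast [Nat.factorial_succ]
      field_simp
      ring
    simp_rw [key]
    have hb : Tendsto (fun n : ℕ => ((n:ℝ)+1) * ((n:ℝ) + μ + 1)) atTop atTop := by
      apply Tendsto.atTop_mul_atTop₀
      · exact tendsto_atTop_add_const_right _ 1 tendsto_natCast_atTop_atTop
      · have := tendsto_atTop_add_const_right atTop (μ+1) (tendsto_natCast_atTop_atTop (R := ℝ))
        simpa [add_assoc] using this
    simpa using (tendsto_const_nhds (x := u)).div_atTop hb

lemma summable_norm_co {μ : ℝ} (hμ : 0 < μ + 1) {u : ℝ} (hu : 0 < u) :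
    Summable (fun m : ℕ => ‖co μ m * u ^ m‖) := by
  refine (summable_co hμ hu).congr fun m => ?_
  rw [Real.norm_eq_abs, abs_of_pos (term_pos hμ hu m)]

lemma besselI_eq (μ : ℝ) {t : ℝ} (ht : 0 < t) :
    besselI μ t = (t/2) ^ μ * ∑' m : ℕ, co μ m * ((t/2)^2) ^ m := by
  have hx : (0:ℝ) < t/2 := by linarith
  rw [← tsum_mul_left]
  unfold besselI co
  congr 1 with m
  have h1 : (t/2) ^ (2 * (m:ℝ) + μ) = (t/2) ^ μ * ((t/2)^2) ^ m := by
    rw [Real.rpow_add hx, mul_comm]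
    congr 1
    rw [show (2 * (m:ℝ)) = ((2*m : ℕ) : ℝ) by push_cast; ring, Real.rpow_natCast, pow_mul]
  rw [h1]
  ring

/-- shifted coefficients of `u * A^2` -/
def cAAs (ν : ℝ) : ℕ → ℝ
  | 0 => 0
  | (m+1) => cAA ν m

lemma hνA (hν : (1:ℝ)/2 ≤ ν) : (0:ℝ) < ν + 1 := by linarith
lemma hνB (hν : (1:ℝ)/2 ≤ ν) : (0:ℝ) < (ν - 1) + 1 := by linarith

lemma range_mul {u : ℝ} (μ₁ μ₂ : ℝ) (cc : ℕ → ℝ)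
    (hcc : ∀ n, cc n = ∑ k ∈ range (n+1), co μ₁ k * co μ₂ (n - k)) (n : ℕ) :
    ∑ k ∈ range (n+1), (co μ₁ k * u ^ k) * (co μ₂ (n-k) * u ^ (n-k)) = cc n * u ^ n := by
  rw [hcc, Finset.sum_mul]
  refine Finset.sum_congr rfl fun k hk => ?_
  have hk' : k ≤ n := Finset.mem_range_succ_iff.mp hk
  have : u ^ k * u ^ (n-k) = u ^ n := by
    rw [← pow_add]
    congr 1
    omega
  calc (co μ₁ k * u ^ k) * (co μ₂ (n-k) * u ^ (n-k))
      = co μ₁ k * co μ₂ (n-k) * (u ^ k * u ^ (n-k)) := by ring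
    _ = co μ₁ k * co μ₂ (n-k) * u ^ n := by rw [this]

section top
variable (hν : (1:ℝ)/2 ≤ ν) {u : ℝ} (hu : 0 < u)
include hν hu

lemma cauchyAA :
    (∑' m, co ν m * u ^ m) * (∑' m, co ν m * u ^ m) = ∑' m, cAA ν m * u ^ m := by
  rw [tsum_mul_tsum_eq_tsum_sum_range_of_summable_norm (summable_norm_co (hνA hν) hu)
    (summable_norm_co (hνA hν) hu)]
  exact tsum_congr (range_mul ν ν (cAA ν) (fun n => rfl))

lemma cauchyAB :
    (∑' m, co ν m * u ^ m) * (∑' m, co (ν-1) m * u ^ m) = ∑' m, cAB ν m * u ^ m := by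
  rw [tsum_mul_tsum_eq_tsum_sum_range_of_summable_norm (summable_norm_co (hνA hν) hu)
    (summable_norm_co (hνB hν) hu)]
  exact tsum_congr (range_mul ν (ν-1) (cAB ν) (fun n => rfl))

lemma cauchyBB :
    (∑' m, co (ν-1) m * u ^ m) * (∑' m, co (ν-1) m * u ^ m) = ∑' m, cBB ν m * u ^ m := by
  rw [tsum_mul_tsum_eq_tsum_sum_range_of_summable_norm (summable_norm_co (hνB hν) hu)
    (summable_norm_co (hνB hν) hu)]
  exact tsum_congr (range_mul (ν-1) (ν-1) (cBB ν) (fun n => rfl))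

lemma summableAA : Summable (fun m => cAA ν m * u ^ m) := by
  refine ((summable_norm_sum_mul_range_of_summable_norm (summable_norm_co (hνA hν) hu)
    (summable_norm_co (hνA hν) hu)).of_norm).congr fun n => range_mul ν ν (cAA ν) (fun _ => rfl) n

lemma summableAB : Summable (fun m => cAB ν m * u ^ m) := by
  refine ((summable_norm_sum_mul_range_of_summable_norm (summable_norm_co (hνA hν) hu)
    (summable_norm_co (hνB hν) hu)).of_norm).congr fun n => range_mul ν (ν-1) (cAB ν) (fun _ => rfl) n

lemma summableBB : Summable (fun m => cBB ν m * u ^ m) := by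
  refine ((summable_norm_sum_mul_range_of_summable_norm (summable_norm_co (hνB hν) hu)
    (summable_norm_co (hνB hν) hu)).of_norm).congr fun n => range_mul (ν-1) (ν-1) (cBB ν) (fun _ => rfl) n

lemma summableAAs : Summable (fun m => cAAs ν m * u ^ m) := by
  apply (summable_nat_add_iff 1).mp
  refine ((summableAA hν hu).mul_right u).congr fun n => ?_
  show cAA ν n * u ^ n * u = cAAs ν (n+1) * u ^ (n+1)
  rw [show cAAs ν (n+1) = cAA ν n from rfl]
  ring

lemma shiftAA : u * ∑' m, cAA ν m * u ^ m = ∑' m, cAAs ν m * u ^ m := by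
  rw [Summable.tsum_eq_zero_add (summableAAs hν hu)]
  rw [show cAAs ν 0 * u ^ 0 = 0 by simp [cAAs]]
  rw [zero_add, ← tsum_mul_left]
  exact tsum_congr fun n => by rw [show cAAs ν (n+1) = cAA ν n from rfl]; ring

end top

section main
variable (hν : (1:ℝ)/2 ≤ ν) {u : ℝ} (hu : 0 < u)
include hν hu

lemma keyQ1 :
    (∑' m, co (ν-1) m * u ^ m) * (∑' m, co (ν-1) m * u ^ m)
      ≤ u * ((∑' m, co ν m * u ^ m) * (∑' m, co ν m * u ^ m))
        + ν * ((∑' m, co ν m * u ^ m) * (∑' m, co (ν-1) m * u ^ m)) := by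
  rw [cauchyBB hν hu, cauchyAA hν hu, cauchyAB hν hu, shiftAA hν hu, ← tsum_mul_left]
  rw [← Summable.tsum_add (summableAAs hν hu) ((summableAB hν hu).mul_left ν)]
  apply Summable.tsum_le_tsum _ (summableBB hν hu)
    ((summableAAs hν hu).add ((summableAB hν hu).mul_left ν))
  intro m
  have hcoef : cBB ν m ≤ cAAs ν m + ν * cAB ν m := by
    cases m with
    | zero => exact coef1₀ hν
    | succ m => exact coef1 hν m
  have hum : (0:ℝ) ≤ u ^ m := le_of_lt (pow_pos hu m)
  calc cBB ν m * u ^ m ≤ (cAAs ν m + ν * cAB ν m) * u ^ m :=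
        mul_le_mul_of_nonneg_right hcoef hum
    _ = cAAs ν m * u ^ m + ν * (cAB ν m * u ^ m) := by ring

lemma keyQ2 :
    2 * (u * ((∑' m, co ν m * u ^ m) * (∑' m, co ν m * u ^ m)))
        + (2*ν - 1) * ((∑' m, co ν m * u ^ m) * (∑' m, co (ν-1) m * u ^ m))
      ≤ 2 * ((∑' m, co (ν-1) m * u ^ m) * (∑' m, co (ν-1) m * u ^ m)) := by
  rw [cauchyBB hν hu, cauchyAA hν hu, cauchyAB hν hu, shiftAA hν hu,
    ← tsum_mul_left, ← tsum_mul_left, ← tsum_mul_left]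
  rw [← Summable.tsum_add ((summableAAs hν hu).mul_left 2) ((summableAB hν hu).mul_left (2*ν-1))]
  apply Summable.tsum_le_tsum _
    (((summableAAs hν hu).mul_left 2).add ((summableAB hν hu).mul_left (2*ν-1)))
    ((summableBB hν hu).mul_left 2)
  intro m
  have hcoef : 2 * cAAs ν m + (2*ν-1) * cAB ν m ≤ 2 * cBB ν m := by
    cases m with
    | zero => exact coef2₀ hν
    | succ m => exact coef2 hν m
  have hum : (0:ℝ) ≤ u ^ m := le_of_lt (pow_pos hu m)
  calc 2 * (cAAs ν m * u ^ m) + (2*ν-1) * (cAB ν m * u ^ m)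
      = (2 * cAAs ν m + (2*ν-1) * cAB ν m) * u ^ m := by ring
    _ ≤ (2 * cBB ν m) * u ^ m := mul_le_mul_of_nonneg_right hcoef hum
    _ = 2 * (cBB ν m * u ^ m) := by ring

end main

/-- the two quadratic inequalities for `f = besselRatio ν t` -/
lemma quad_bounds {ν t : ℝ} (hν : (1:ℝ)/2 ≤ ν) (ht : 0 < t) :
    0 < besselRatio ν t ∧
    0 ≤ t * (besselRatio ν t)^2 + 2*ν*(besselRatio ν t) - t ∧
    t * (besselRatio ν t)^2 + (2*ν - 1)*(besselRatio ν t) - t ≤ 0 := by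
  have hx : (0:ℝ) < t/2 := by linarith
  have hu : (0:ℝ) < (t/2)^2 := by positivity
  set u : ℝ := (t/2)^2 with hud
  set SA : ℝ := ∑' m, co ν m * u ^ m with hSA
  set SB : ℝ := ∑' m, co (ν-1) m * u ^ m with hSB
  have hSApos : 0 < SA :=
    Summable.tsum_pos (summable_co (hνA hν) hu) (fun m => le_of_lt (term_pos (hνA hν) hu m)) 0
      (term_pos (hνA hν) hu 0)
  have hSBpos : 0 < SB :=
    Summable.tsum_pos (summable_co (hνB hν) hu) (fun m => le_of_lt (term_pos (hνB hν) hu m)) 0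
      (term_pos (hνB hν) hu 0)
  have hIA : besselI ν t = (t/2) ^ ν * SA := besselI_eq ν ht
  have hIB : besselI (ν-1) t = (t/2) ^ (ν-1) * SB := besselI_eq (ν-1) ht
  have hxν : (0:ℝ) < (t/2) ^ (ν-1) := Real.rpow_pos_of_pos hx _
  set r : ℝ := SA / SB with hr
  have hrpos : 0 < r := div_pos hSApos hSBpos
  have hratio : besselRatio ν t = (t/2) * r := by
    unfold besselRatio
    have hsplit : (t/2) ^ ν = (t/2)^(ν-1) * (t/2) := by
      calc (t/2)^ν = (t/2)^((ν-1)+(1:ℝ)) := by norm_num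
        _ = (t/2)^(ν-1) * (t/2)^(1:ℝ) := Real.rpow_add hx _ _
        _ = (t/2)^(ν-1) * (t/2) := by rw [Real.rpow_one]
    rw [hIA, hIB, hr, hsplit]
    rw [show (t/2) ^ (ν-1) * (t/2) * SA = (t/2) ^ (ν-1) * ((t/2) * SA) by ring]
    rw [mul_div_mul_left _ _ (ne_of_gt hxν)]
    ring
  have hq1 : 1 ≤ u * r^2 + ν * r := by
    have h := keyQ1 hν hu
    rw [← hSA, ← hSB] at h
    have hid : u * r^2 + ν * r - 1 = (u * (SA*SA) + ν * (SA*SB) - SB*SB) / (SB*SB) := by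
      rw [hr]; field_simp
    have : 0 ≤ (u * (SA*SA) + ν * (SA*SB) - SB*SB) / (SB*SB) :=
      div_nonneg (by linarith) (by positivity)
    linarith [hid ▸ this]
  have hq2 : u * r^2 + (ν - 1/2) * r ≤ 1 := by
    have h := keyQ2 hν hu
    rw [← hSA, ← hSB] at h
    have hid : 1 - (u * r^2 + (ν - 1/2) * r)
        = (2*(SB*SB) - (2*(u * (SA*SA)) + (2*ν-1) * (SA*SB))) / (2*(SB*SB)) := by
      rw [hr]; field_simp
    have : 0 ≤ (2*(SB*SB) - (2*(u * (SA*SA)) + (2*ν-1) * (SA*SB))) / (2*(SB*SB)) :=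
      div_nonneg (by linarith) (by positivity)
    linarith [hid ▸ this]
  refine ⟨by rw [hratio]; positivity, ?_, ?_⟩
  · have : t * ((t/2)*r)^2 + 2*ν*((t/2)*r) - t = 2*(t/2)*(u*r^2 + ν*r - 1) := by
      rw [hud]; ring
    rw [hratio, this]
    have : 0 ≤ u*r^2 + ν*r - 1 := by linarith
    positivity
  · have hid2 : t * ((t/2)*r)^2 + (2*ν-1)*((t/2)*r) - t = 2*(t/2)*((u*r^2 + (ν-1/2)*r) - 1) := by
      rw [hud]; ring
    rw [hratio, hid2]
    have h1 : (u*r^2 + (ν-1/2)*r) - 1 ≤ 0 := by linarith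
    have : 2*(t/2) > 0 := by linarith
    nlinarith

end BesselBnd

/-- **Lemma.** For `ν ≥ 1/2` and `t > 0`, `g_ν(t) ≤ f_ν(t) ≤ g_{ν-1/2}(t) ≤ 1`. -/
theorem besselRatio_bounds (ν t : ℝ) (hν : 1 / 2 ≤ ν) (ht : 0 < t) :
    gFun ν t ≤ besselRatio ν t ∧ besselRatio ν t ≤ gFun (ν - 1 / 2) t ∧
      gFun (ν - 1 / 2) t ≤ 1 := by
  obtain ⟨hfpos, hq1, hq2⟩ := BesselBnd.quad_bounds hν ht
  set f := besselRatio ν t with hfdef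
  have hν0 : (0:ℝ) < ν := by linarith
  have ha : (0:ℝ) ≤ ν - 1/2 := by linarith
  refine ⟨?_, ?_, ?_⟩
  · -- lower bound
    unfold gFun
    set s := Real.sqrt (ν^2 + t^2) with hs
    have hssq : s^2 = ν^2 + t^2 := Real.sq_sqrt (by positivity)
    have hst : t ≤ s := by
      rw [hs]
      calc t = Real.sqrt (t^2) := (Real.sqrt_sq ht.le).symm
        _ ≤ _ := Real.sqrt_le_sqrt (by nlinarith [sq_nonneg ν])
    have hdenpos : 0 < ν + s := by linarith
    rw [div_le_iff₀ hdenpos]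
    have hkey : (t - ν*f)^2 ≤ (f*s)^2 := by
      have hfs : (f*s)^2 = f^2*(ν^2+t^2) := by rw [mul_pow, hssq]
      nlinarith [mul_nonneg ht.le hq1]
    have habs : t - ν*f ≤ f*s := by
      have h3 := Real.sqrt_le_sqrt hkey
      rw [Real.sqrt_sq_eq_abs, Real.sqrt_sq (by positivity : (0:ℝ) ≤ f*s)] at h3
      linarith [le_abs_self (t - ν*f)]
    nlinarith [habs]
  · -- upper bound
    unfold gFun
    set s := Real.sqrt ((ν-1/2)^2 + t^2) with hs
    have hssq : s^2 = (ν-1/2)^2 + t^2 := Real.sq_sqrt (by positivity)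
    have hst : t ≤ s := by
      rw [hs]
      calc t = Real.sqrt (t^2) := (Real.sqrt_sq ht.le).symm
        _ ≤ _ := Real.sqrt_le_sqrt (by nlinarith [sq_nonneg (ν-1/2)])
    have hdenpos : 0 < (ν - 1/2) + s := by linarith
    rw [le_div_iff₀ hdenpos]
    have haf : (ν-1/2)*f ≤ t := by nlinarith [mul_nonneg ha hfpos.le, mul_pos ht (mul_pos hfpos hfpos)]
    have hkey : (f*s)^2 ≤ (t - (ν-1/2)*f)^2 := by
      have hfs : (f*s)^2 = f^2*((ν-1/2)^2+t^2) := by rw [mul_pow, hssq]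
      nlinarith [mul_nonpos_of_nonneg_of_nonpos ht.le hq2]
    have habs : f*s ≤ t - (ν-1/2)*f := by
      have h3 := Real.sqrt_le_sqrt hkey
      rw [Real.sqrt_sq_eq_abs, Real.sqrt_sq (by linarith : (0:ℝ) ≤ t - (ν-1/2)*f)] at h3
      linarith [le_abs_self (f*s)]
    nlinarith [habs]
  · -- gFun (ν-1/2) t ≤ 1
    unfold gFun
    set s := Real.sqrt ((ν-1/2)^2 + t^2) with hs
    have hst : t ≤ s := by
      rw [hs]
      calc t = Real.sqrt (t^2) := (Real.sqrt_sq ht.le).symm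
        _ ≤ _ := Real.sqrt_le_sqrt (by nlinarith [sq_nonneg (ν-1/2)])
    have hdenpos : 0 < (ν - 1/2) + s := by linarith
    rw [div_le_one hdenpos]
    linarith

end
end

section
/- For every real ν ≥ 1/2, the function t ↦ ξ_ν(t) = −t·f_ν(t) + log((2π)^ν · I_{ν−1}(t)/t^{ν−1}) is strictly decreasing on (0,∞). -/
open MeasureTheory Real Filter Set
open scoped ENNReal NNReal Topology

noncomputable section

/-! With `y = t²/4` and `J_a = ₀F̃₁(; a; ·)` one has `I_μ(t) = (t/2)^μ J_{μ+1}(y)`, hence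
`ξ_ν(t) = -2y J_{ν+1}(y)/J_ν(y) + log J_ν(y) + log (2π^ν)`. Since `J_a' = J_{a+1}`, the
`y`-derivative of this is `-H/J_ν²` with `H = J_{ν+1}J_ν + 2y(J_{ν+2}J_ν - J_{ν+1}²)`.
Expanding `H` by Cauchy products in the coefficients `V_{a,b}(k)` of `J_a J_b`, its constant
term is positive and the coefficient of `y^{k+1}` is `(2ν-1) V_{ν+2,ν}(k) / ((ν+k)(k+1)) ≥ 0`,
by the recurrence `(k+1) V_{a,b}(k+1) = V_{a+1,b}(k) + V_{a,b+1}(k)` and the identity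
`(a+k) V_{a+1,b}(k) = (b+k) V_{a,b+1}(k)`. -/

open Finset

def hyp0F1RegCoeff (a : ℝ) (m : ℕ) : ℝ := 1 / (m.factorial * Gamma (m + a))

/-- The regularized confluent hypergeometric limit function `₀F̃₁(; a; x)`. -/
def hyp0F1Reg (a x : ℝ) : ℝ := ∑' m : ℕ, hyp0F1RegCoeff a m * x ^ m

lemma hyp0F1RegCoeff_pos {a : ℝ} (ha : 0 < a) (m : ℕ) : 0 < hyp0F1RegCoeff a m := by
  have := Gamma_pos_of_pos (by positivity : 0 < (m : ℝ) + a)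
  unfold hyp0F1RegCoeff
  positivity

lemma succ_mul_hyp0F1RegCoeff_succ (a : ℝ) (m : ℕ) :
    ((m : ℝ) + 1) * hyp0F1RegCoeff a (m + 1) = hyp0F1RegCoeff (a + 1) m := by
  rw [hyp0F1RegCoeff, hyp0F1RegCoeff, Nat.factorial_succ, Nat.cast_mul, Nat.cast_succ,
    add_right_comm, add_assoc]
  field_simp

lemma add_mul_hyp0F1RegCoeff_add_one {a : ℝ} (ha : 0 < a) (m : ℕ) :
    ((m : ℝ) + a) * hyp0F1RegCoeff (a + 1) m = hyp0F1RegCoeff a m := by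
  have := (Gamma_pos_of_pos (by positivity : 0 < (m : ℝ) + a)).ne'
  rw [hyp0F1RegCoeff, hyp0F1RegCoeff, ← add_assoc, Gamma_add_one (by positivity)]
  field_simp

lemma summable_norm_hyp0F1RegCoeff_mul_pow {a : ℝ} (ha : 0 < a) (x : ℝ) :
    Summable fun m => ‖hyp0F1RegCoeff a m * x ^ m‖ := by
  refine .of_norm_bounded_eventually_nat (Real.summable_pow_div_factorial ‖x‖) ?_
  filter_upwards [eventually_ge_atTop 2] with m hm
  have h2 : (2 : ℝ) ≤ m + a := by
    have : (2 : ℝ) ≤ m := by exact_mod_cast hm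
    linarith
  have hΓ : 1 ≤ Gamma (m + a) :=
    Gamma_two ▸ Gamma_strictMonoOn_Ici.monotoneOn (mem_Ici.2 le_rfl) (mem_Ici.2 h2) h2
  rw [norm_norm, norm_mul, norm_pow, Real.norm_of_nonneg (hyp0F1RegCoeff_pos ha m).le,
    hyp0F1RegCoeff, div_mul_eq_mul_div, one_mul]
  gcongr
  exact le_mul_of_one_le_right (by positivity) hΓ

lemma summable_hyp0F1RegCoeff_mul_pow {a : ℝ} (ha : 0 < a) (x : ℝ) :
    Summable fun m => hyp0F1RegCoeff a m * x ^ m :=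
  (summable_norm_hyp0F1RegCoeff_mul_pow ha x).of_norm

lemma hyp0F1Reg_pos {a x : ℝ} (ha : 0 < a) (hx : 0 ≤ x) : 0 < hyp0F1Reg a x :=
  (summable_hyp0F1RegCoeff_mul_pow ha x).tsum_pos
    (fun m => mul_nonneg (hyp0F1RegCoeff_pos ha m).le (pow_nonneg hx m)) 0
    (by simpa using hyp0F1RegCoeff_pos ha 0)

lemma hasSum_hyp0F1RegCoeff_mul_deriv_pow {a : ℝ} (ha : 0 < a) (x : ℝ) :
    HasSum (fun m : ℕ => hyp0F1RegCoeff a m * (m * x ^ (m - 1))) (hyp0F1Reg (a + 1) x) := by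
  rw [← hasSum_nat_add_iff' 1]
  simp only [range_one, sum_singleton, Nat.cast_zero, zero_mul, mul_zero, sub_zero,
    Nat.cast_add, Nat.cast_one, Nat.add_sub_cancel]
  have hshift : (fun m : ℕ => hyp0F1RegCoeff a (m + 1) * (((m : ℝ) + 1) * x ^ m)) =
      fun m => hyp0F1RegCoeff (a + 1) m * x ^ m := by
    ext m
    rw [← succ_mul_hyp0F1RegCoeff_succ]
    ring
  rw [hshift]
  exact (summable_hyp0F1RegCoeff_mul_pow (by positivity) x).hasSum

theorem hasDerivAt_hyp0F1Reg {a : ℝ} (ha : 0 < a) (x : ℝ) :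
    HasDerivAt (hyp0F1Reg a) (hyp0F1Reg (a + 1) x) x := by
  set R := |x| + 1
  have hxR : x ∈ Metric.ball (0 : ℝ) R := by simp [R]
  rw [← (hasSum_hyp0F1RegCoeff_mul_deriv_pow ha x).tsum_eq]
  refine hasDerivAt_tsum_of_isPreconnected
    (hasSum_hyp0F1RegCoeff_mul_deriv_pow ha R).summable Metric.isOpen_ball
    (convex_ball 0 R).isPreconnected (fun m y _ => (hasDerivAt_pow m y).const_mul _)
    (fun m y hy => ?_) hxR (summable_hyp0F1RegCoeff_mul_pow ha x) hxR
  have hyR : |y| ≤ R := by simpa using (Metric.mem_ball.1 hy).le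
  rw [norm_mul, norm_mul, norm_pow, Real.norm_of_nonneg (hyp0F1RegCoeff_pos ha m).le,
    Real.norm_natCast, Real.norm_eq_abs]
  have := (hyp0F1RegCoeff_pos ha m).le
  gcongr

def hyp0F1RegMulCoeff (a b : ℝ) (k : ℕ) : ℝ :=
  ∑ p ∈ antidiagonal k, hyp0F1RegCoeff a p.1 * hyp0F1RegCoeff b p.2

lemma hyp0F1RegMulCoeff_pos {a b : ℝ} (ha : 0 < a) (hb : 0 < b) (k : ℕ) :
    0 < hyp0F1RegMulCoeff a b k :=
  sum_pos (fun p _ => mul_pos (hyp0F1RegCoeff_pos ha p.1) (hyp0F1RegCoeff_pos hb p.2))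
    ⟨(0, k), by simp⟩

lemma hyp0F1RegMulCoeff_comm (a b : ℝ) (k : ℕ) :
    hyp0F1RegMulCoeff a b k = hyp0F1RegMulCoeff b a k := by
  rw [hyp0F1RegMulCoeff, ← Nat.sum_antidiagonal_swap]
  simp only [hyp0F1RegMulCoeff, Prod.fst_swap, Prod.snd_swap, mul_comm]

lemma hasSum_hyp0F1RegMulCoeff_mul_pow {a b : ℝ} (ha : 0 < a) (hb : 0 < b) (x : ℝ) :
    HasSum (fun k => hyp0F1RegMulCoeff a b k * x ^ k) (hyp0F1Reg a x * hyp0F1Reg b x) := by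
  have hca := summable_norm_hyp0F1RegCoeff_mul_pow ha x
  have hcb := summable_norm_hyp0F1RegCoeff_mul_pow hb x
  have hterm : (fun k => hyp0F1RegMulCoeff a b k * x ^ k) = fun k =>
      ∑ p ∈ antidiagonal k, hyp0F1RegCoeff a p.1 * x ^ p.1 * (hyp0F1RegCoeff b p.2 * x ^ p.2) := by
    ext k
    rw [hyp0F1RegMulCoeff, sum_mul]
    refine sum_congr rfl fun p hp => ?_
    rw [← mem_antidiagonal.1 hp, pow_add]
    ring
  rw [hterm, hyp0F1Reg, hyp0F1Reg, tsum_mul_tsum_eq_tsum_sum_antidiagonal_of_summable_norm hca hcb]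
  exact (summable_norm_sum_mul_antidiagonal_of_summable_norm hca hcb).of_norm.hasSum

lemma sum_antidiagonal_succ_snd_mul_hyp0F1RegCoeff (a b : ℝ) (k : ℕ) :
    ∑ p ∈ antidiagonal (k + 1), (p.2 : ℝ) * (hyp0F1RegCoeff a p.1 * hyp0F1RegCoeff b p.2) =
      hyp0F1RegMulCoeff a (b + 1) k := by
  rw [Nat.sum_antidiagonal_succ', hyp0F1RegMulCoeff]
  simp only [Nat.cast_zero, zero_mul, zero_add, Nat.cast_succ, ← succ_mul_hyp0F1RegCoeff_succ]
  exact sum_congr rfl fun p _ => by ring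

lemma succ_mul_hyp0F1RegMulCoeff_succ (a b : ℝ) (k : ℕ) :
    ((k : ℝ) + 1) * hyp0F1RegMulCoeff a b (k + 1) =
      hyp0F1RegMulCoeff (a + 1) b k + hyp0F1RegMulCoeff a (b + 1) k := by
  have hsplit : ((k : ℝ) + 1) * hyp0F1RegMulCoeff a b (k + 1) =
      ∑ p ∈ antidiagonal (k + 1), (p.2 : ℝ) * (hyp0F1RegCoeff b p.1 * hyp0F1RegCoeff a p.2) +
      ∑ p ∈ antidiagonal (k + 1), (p.2 : ℝ) * (hyp0F1RegCoeff a p.1 * hyp0F1RegCoeff b p.2) := by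
    rw [← Nat.sum_antidiagonal_swap, hyp0F1RegMulCoeff, mul_sum, ← sum_add_distrib]
    refine sum_congr rfl fun p hp => ?_
    have hk : (p.1 : ℝ) + p.2 = k + 1 := by exact_mod_cast mem_antidiagonal.1 hp
    simp only [Prod.fst_swap, Prod.snd_swap, ← hk]
    ring
  rw [hsplit, sum_antidiagonal_succ_snd_mul_hyp0F1RegCoeff,
    sum_antidiagonal_succ_snd_mul_hyp0F1RegCoeff, hyp0F1RegMulCoeff_comm b]

lemma add_succ_mul_hyp0F1RegMulCoeff_add_one {a : ℝ} (ha : 0 < a) (b : ℝ) (k : ℕ) :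
    (a + (k + 1)) * hyp0F1RegMulCoeff (a + 1) b (k + 1) =
      hyp0F1RegMulCoeff a b (k + 1) + hyp0F1RegMulCoeff (a + 1) (b + 1) k := by
  rw [← sum_antidiagonal_succ_snd_mul_hyp0F1RegCoeff, hyp0F1RegMulCoeff, hyp0F1RegMulCoeff,
    mul_sum, ← sum_add_distrib]
  refine sum_congr rfl fun p hp => ?_
  have hk : (p.1 : ℝ) + p.2 = k + 1 := by exact_mod_cast mem_antidiagonal.1 hp
  rw [← hk, ← add_mul_hyp0F1RegCoeff_add_one ha]
  ring

/-- Both sides equal `hyp0F1RegMulCoeff a b k + hyp0F1RegMulCoeff (a + 1) (b + 1) (k - 1)`. -/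
lemma add_mul_hyp0F1RegMulCoeff_add_one_left {a b : ℝ} (ha : 0 < a) (hb : 0 < b) (k : ℕ) :
    (a + k) * hyp0F1RegMulCoeff (a + 1) b k = (b + k) * hyp0F1RegMulCoeff a (b + 1) k := by
  cases k with
  | zero =>
    have hca := add_mul_hyp0F1RegCoeff_add_one ha 0
    have hcb := add_mul_hyp0F1RegCoeff_add_one hb 0
    simp only [hyp0F1RegMulCoeff, Nat.antidiagonal_zero, sum_singleton, Nat.cast_zero, zero_add]
      at hca hcb ⊢
    linear_combination hyp0F1RegCoeff b 0 * hca - hyp0F1RegCoeff a 0 * hcb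
  | succ k =>
    rw [hyp0F1RegMulCoeff_comm a, Nat.cast_succ, add_succ_mul_hyp0F1RegMulCoeff_add_one ha,
      add_succ_mul_hyp0F1RegMulCoeff_add_one hb, hyp0F1RegMulCoeff_comm b,
      hyp0F1RegMulCoeff_comm (b + 1)]

lemma hyp0F1RegMulCoeff_turan_nonneg {ν : ℝ} (hν : 1 / 2 ≤ ν) (k : ℕ) :
    0 ≤ hyp0F1RegMulCoeff (ν + 1) ν (k + 1) +
      2 * (hyp0F1RegMulCoeff (ν + 2) ν k - hyp0F1RegMulCoeff (ν + 1) (ν + 1) k) := by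
  have hν0 : 0 < ν := by linarith
  have hpascal := succ_mul_hyp0F1RegMulCoeff_succ (ν + 1) ν k
  have hratio := add_mul_hyp0F1RegMulCoeff_add_one_left (by positivity : 0 < ν + 1) hν0 k
  have hA := hyp0F1RegMulCoeff_pos (by positivity : 0 < ν + 2) hν0 k
  rw [show ν + 1 + 1 = ν + 2 by ring] at hpascal hratio
  have key : (ν + k) * (k + 1) * (hyp0F1RegMulCoeff (ν + 1) ν (k + 1) +
      2 * (hyp0F1RegMulCoeff (ν + 2) ν k - hyp0F1RegMulCoeff (ν + 1) (ν + 1) k)) =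
      (2 * ν - 1) * hyp0F1RegMulCoeff (ν + 2) ν k := by
    linear_combination (ν + k) * hpascal + (2 * k + 1) * hratio
  refine nonneg_of_mul_nonneg_right (key ▸ mul_nonneg (by linarith) hA.le) ?_
  positivity

/-- The coefficients of the left side are `hyp0F1RegMulCoeff (ν + 1) ν 0 > 0` and the
nonnegative numbers of `hyp0F1RegMulCoeff_turan_nonneg`. -/
theorem hyp0F1Reg_turan_pos {ν x : ℝ} (hν : 1 / 2 ≤ ν) (hx : 0 ≤ x) :
    0 < hyp0F1Reg (ν + 1) x * hyp0F1Reg ν x +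
      2 * x * (hyp0F1Reg (ν + 2) x * hyp0F1Reg ν x - hyp0F1Reg (ν + 1) x ^ 2) := by
  have hν0 : 0 < ν := by linarith
  have h10 := hasSum_hyp0F1RegMulCoeff_mul_pow (by positivity : 0 < ν + 1) hν0 x
  have h20 := hasSum_hyp0F1RegMulCoeff_mul_pow (by positivity : 0 < ν + 2) hν0 x
  have h11 := hasSum_hyp0F1RegMulCoeff_mul_pow (by positivity : 0 < ν + 1)
    (by positivity : 0 < ν + 1) x
  have htail := ((hasSum_nat_add_iff' 1).2 h10).add ((h20.sub h11).mul_left (2 * x))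
  have hnonneg := htail.nonneg fun k => by
    have := hyp0F1RegMulCoeff_turan_nonneg hν k
    calc (0 : ℝ) ≤ (hyp0F1RegMulCoeff (ν + 1) ν (k + 1) +
          2 * (hyp0F1RegMulCoeff (ν + 2) ν k - hyp0F1RegMulCoeff (ν + 1) (ν + 1) k)) *
          x ^ (k + 1) := by positivity
      _ = _ := by ring
  have h0 := hyp0F1RegMulCoeff_pos (by positivity : 0 < ν + 1) hν0 0
  simp only [range_one, sum_singleton, pow_zero, mul_one] at hnonneg
  linarith

/-- `ξ_ν(2 √y) - log (2 π^ν)`. -/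
def xiReduced (ν y : ℝ) : ℝ :=
  -2 * y * (hyp0F1Reg (ν + 1) y / hyp0F1Reg ν y) + log (hyp0F1Reg ν y)

lemma hasDerivAt_xiReduced {ν y : ℝ} (hν : 0 < ν) (hy : 0 ≤ y) :
    HasDerivAt (xiReduced ν)
      (-(hyp0F1Reg (ν + 1) y * hyp0F1Reg ν y +
        2 * y * (hyp0F1Reg (ν + 2) y * hyp0F1Reg ν y - hyp0F1Reg (ν + 1) y ^ 2)) /
        hyp0F1Reg ν y ^ 2) y := by
  have hJ := (hyp0F1Reg_pos hν hy).ne'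
  have hd0 := hasDerivAt_hyp0F1Reg hν y
  have hd1 := hasDerivAt_hyp0F1Reg (by positivity : 0 < ν + 1) y
  rw [show ν + 1 + 1 = ν + 2 by ring] at hd1
  refine ((((hasDerivAt_id' y).const_mul (-2)).mul (hd1.div hd0 hJ)).add
    (hd0.log hJ)).congr_deriv ?_
  rw [Pi.div_apply]
  field_simp
  ring

theorem strictAntiOn_xiReduced {ν : ℝ} (hν : 1 / 2 ≤ ν) :
    StrictAntiOn (xiReduced ν) (Ici 0) := by
  have hν0 : 0 < ν := by linarith
  refine strictAntiOn_of_deriv_neg (convex_Ici 0)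
    (fun y hy => (hasDerivAt_xiReduced hν0 hy).continuousAt.continuousWithinAt) fun y hy => ?_
  rw [interior_Ici] at hy
  rw [(hasDerivAt_xiReduced hν0 (le_of_lt hy)).deriv, neg_div]
  exact neg_neg_of_pos (div_pos (hyp0F1Reg_turan_pos hν (le_of_lt hy))
    (pow_pos (hyp0F1Reg_pos hν0 (le_of_lt hy)) 2))

lemma besselI_eq_rpow_mul_hyp0F1Reg (μ : ℝ) {t : ℝ} (ht : 0 < t) :
    besselI μ t = (t / 2) ^ μ * hyp0F1Reg (μ + 1) (t ^ 2 / 4) := by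
  rw [besselI, hyp0F1Reg, ← tsum_mul_left]
  refine tsum_congr fun m => ?_
  rw [rpow_add (by positivity), rpow_mul_natCast (by positivity), rpow_two, hyp0F1RegCoeff,
    add_assoc]
  ring

lemma besselRatio_eq {ν t : ℝ} (ht : 0 < t) :
    besselRatio ν t = t / 2 * (hyp0F1Reg (ν + 1) (t ^ 2 / 4) / hyp0F1Reg ν (t ^ 2 / 4)) := by
  have h := besselI_eq_rpow_mul_hyp0F1Reg (ν - 1) ht
  rw [sub_add_cancel] at h
  have hpow : (t / 2) ^ ν = (t / 2) ^ (ν - 1) * (t / 2) := by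
    rw [← rpow_add_one (by positivity), sub_add_cancel]
  have : (t / 2) ^ (ν - 1) ≠ 0 := by positivity
  rw [besselRatio, besselI_eq_rpow_mul_hyp0F1Reg ν ht, h, hpow]
  field_simp

lemma xiFun_eq_xiReduced {ν t : ℝ} (hν : 0 < ν) (ht : 0 < t) :
    xiFun ν t = xiReduced ν (t ^ 2 / 4) + log (2 * π ^ ν) := by
  have hJ := (hyp0F1Reg_pos hν (by positivity : 0 ≤ t ^ 2 / 4)).ne'
  have h := besselI_eq_rpow_mul_hyp0F1Reg (ν - 1) ht
  rw [sub_add_cancel] at h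
  have hconst : (2 * π) ^ ν * besselI (ν - 1) t / t ^ (ν - 1) =
      2 * π ^ ν * hyp0F1Reg ν (t ^ 2 / 4) := by
    have : t ^ (ν - 1) ≠ 0 := by positivity
    have : (2 : ℝ) ^ ν ≠ 0 := by positivity
    rw [h, div_rpow ht.le zero_le_two, mul_rpow zero_le_two pi_pos.le,
      rpow_sub_one two_ne_zero]
    field_simp
  rw [xiFun, xiReduced, besselRatio_eq ht, hconst, log_mul (by positivity) hJ]
  ring

/-- **Lemma.** For `ν ≥ 1/2`, `t ↦ ξ_ν(t)` is strictly decreasing on `(0,∞)`. -/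
theorem strictAntiOn_xiFun (ν : ℝ) (hν : 1 / 2 ≤ ν) :
    StrictAntiOn (xiFun ν) (Set.Ioi (0:ℝ)) := by
  have hν0 : 0 < ν := by linarith
  rintro s (hs : 0 < s) t (ht : 0 < t) hst
  rw [xiFun_eq_xiReduced hν0 hs, xiFun_eq_xiReduced hν0 ht]
  have hsq : s ^ 2 / 4 < t ^ 2 / 4 := by gcongr
  exact add_lt_add_left
    (strictAntiOn_xiReduced hν (mem_Ici.2 (by positivity)) (mem_Ici.2 (by positivity)) hsq) _

end
end
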